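/- One-step descent lemma for mini-batch SAM: under the assumptions that each f_i is β-smooth, f is λ-smooth and α-PL, and interpolation holds, the mini-batch SAM update x_{t+1} = x_t − η g_t^B(x_t + ρ g_t^B(x_t)), with g_t^B the average gradient over a batch of B i.i.d. uniform indices, satisfies E[f(x_{t+1}) | x_t] ≤ (1 − ηα(1 − (κ_B + 1/2)βρ) + η²αλ(βρ+1)²κ_B)·f(x_t), where κ_B = (1/B)((B−1)/2 + β/α). -/

import Mathlib

/-!
By λ-smoothness of `f`, `f (x - η h)` is bounded by a quadratic in the SAM direction `h`, and
β-smoothness of the `f i` keeps `h` within `βρ ‖g‖` of the batch gradient `g` at `x`. Over the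
i.i.d. batch, `g` has mean `∇f x` and second moment
`(1 - 1/B) ‖∇f x‖² + (1/B) 𝔼ᵢ ‖∇fᵢ x‖²`. The PL inequality controls the `‖∇f x‖²` terms, and
`‖∇fᵢ x‖² ≤ 2β fᵢ x` (a gradient step cannot make the nonnegative `fᵢ` negative) controls the
variance term.
-/

open Finset
open scoped BigOperators RealInnerProductSpace

section Counting

variable {ι κ M : Type*} [Fintype ι] [DecidableEq ι] [Fintype κ] [Nonempty κ]
  [AddCommMonoid M] [Module ℚ≥0 M]

theorem Fintype.expect_comp_eval (j : ι) (g : κ → M) :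
    𝔼 c : ι → κ, g (c j) = 𝔼 k, g k := by
  rw [Fintype.expect_equiv (Equiv.funSplitAt j κ) (fun c => g (c j)) (fun p => g p.1)
    fun _ => rfl, ← univ_product_univ, expect_product]
  simp only [Fintype.expect_const]

theorem Fintype.expect_comp_eval_eval {j j' : ι} (h : j' ≠ j) (g : κ → κ → M) :
    𝔼 c : ι → κ, g (c j) (c j') = 𝔼 k, 𝔼 k', g k k' := by
  rw [Fintype.expect_equiv (Equiv.funSplitAt j κ) (fun c => g (c j) (c j'))
    (fun p => g p.1 (p.2 ⟨j', h⟩)) fun _ => rfl, ← univ_product_univ, expect_product]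
  simp only [Fintype.expect_comp_eval]

end Counting

theorem Fintype.expect_expect_ite_eq {ι : Type*} [Fintype ι] [DecidableEq ι] [Nonempty ι]
    (a b : ℝ) :
    𝔼 i : ι, 𝔼 j : ι, (if i = j then a else b)
      = (Fintype.card ι : ℝ)⁻¹ * a + (1 - (Fintype.card ι : ℝ)⁻¹) * b := by
  have h : ∀ i j : ι, (if i = j then a else b) = b + if i = j then a - b else 0 := by
    intro i j; split_ifs <;> ring
  simp only [h, expect_add_distrib, Fintype.expect_ite_eq, Fintype.expect_const, NNRat.smul_def]
  push_cast
  ring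

section InnerProductSpace

variable {E : Type*} [NormedAddCommGroup E] [InnerProductSpace ℝ E]

theorem inner_inv_card_smul_sum_right {ι : Type*} [Fintype ι] (w : E) (u : ι → E) :
    ⟪w, (Fintype.card ι : ℝ)⁻¹ • ∑ i, u i⟫ = 𝔼 i, ⟪w, u i⟫ := by
  rw [real_inner_smul_right, inner_sum, Fintype.expect_eq_sum_div_card, inv_mul_eq_div]

theorem norm_inv_card_smul_sum_sq {ι : Type*} [Fintype ι] (u : ι → E) :
    ‖(Fintype.card ι : ℝ)⁻¹ • ∑ i, u i‖ ^ 2 = 𝔼 i, 𝔼 j, ⟪u i, u j⟫ := by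
  rw [← real_inner_self_eq_norm_sq, inner_inv_card_smul_sum_right]
  exact expect_congr rfl fun i _ => by rw [real_inner_comm, inner_inv_card_smul_sum_right]

/-- A batch of `B` i.i.d. uniform indices is a sequence `b : Fin B → κ`, so averaging over all
of them (`𝔼 b`) is the expectation over the batch. -/
noncomputable def batchMean {κ : Type*} {B : ℕ} (v : κ → E) (b : Fin B → κ) : E :=
  (B : ℝ)⁻¹ • ∑ j, v (b j)

section batchMean

variable {κ : Type*} {B : ℕ}

theorem batchMean_eq_inv_card_smul_sum (v : κ → E) (b : Fin B → κ) :
    batchMean v b = (Fintype.card (Fin B) : ℝ)⁻¹ • ∑ j, v (b j) := by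
  rw [Fintype.card_fin, batchMean]

theorem norm_batchMean_sub_le {u v : κ → E} {r : ℝ} (hr : 0 ≤ r) (huv : ∀ i, ‖u i - v i‖ ≤ r)
    (b : Fin B → κ) : ‖batchMean u b - batchMean v b‖ ≤ r := by
  rw [batchMean, batchMean, ← smul_sub, ← sum_sub_distrib, norm_smul, norm_inv,
    Real.norm_natCast]
  calc (B : ℝ)⁻¹ * ‖∑ j, (u (b j) - v (b j))‖
      ≤ (B : ℝ)⁻¹ * ∑ _j : Fin B, r := by
        gcongr
        exact (norm_sum_le _ _).trans (sum_le_sum fun j _ => huv (b j))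
    _ ≤ r := by
        rw [sum_const, card_univ, Fintype.card_fin, nsmul_eq_mul, ← mul_assoc]
        exact mul_le_of_le_one_left hr (inv_mul_le_one_of_le₀ le_rfl (Nat.cast_nonneg B))

variable [Fintype κ] [Nonempty κ]

theorem expect_inner_batchMean (hB : 0 < B) (w : E) (v : κ → E) :
    𝔼 b : Fin B → κ, ⟪w, batchMean v b⟫ = 𝔼 i, ⟪w, v i⟫ := by
  have : Nonempty (Fin B) := ⟨⟨0, hB⟩⟩
  simp only [batchMean_eq_inv_card_smul_sum, inner_inv_card_smul_sum_right]
  rw [expect_comm]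
  simp only [Fintype.expect_comp_eval (g := fun i => ⟪w, v i⟫), Fintype.expect_const]

theorem expect_norm_sq_batchMean (hB : 0 < B) (v : κ → E) :
    𝔼 b : Fin B → κ, ‖batchMean v b‖ ^ 2
      = (B : ℝ)⁻¹ * 𝔼 i, ‖v i‖ ^ 2
        + (1 - (B : ℝ)⁻¹) * ‖(Fintype.card κ : ℝ)⁻¹ • ∑ i, v i‖ ^ 2 := by
  have : Nonempty (Fin B) := ⟨⟨0, hB⟩⟩
  -- two draws of the batch are independent unless they are the same draw
  have hpair : ∀ j j' : Fin B, 𝔼 b : Fin B → κ, ⟪v (b j), v (b j')⟫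
      = if j = j' then 𝔼 i, ‖v i‖ ^ 2 else 𝔼 i, 𝔼 i', ⟪v i, v i'⟫ := by
    intro j j'
    split_ifs with h
    · subst h
      simp only [real_inner_self_eq_norm_sq]
      exact Fintype.expect_comp_eval j fun i => ‖v i‖ ^ 2
    · exact Fintype.expect_comp_eval_eval (Ne.symm h) fun i i' => ⟪v i, v i'⟫
  simp only [batchMean_eq_inv_card_smul_sum, norm_inv_card_smul_sum_sq]
  rw [expect_comm]
  simp only [expect_comm (s := univ (α := Fin B → κ)), hpair, Fintype.expect_expect_ite_eq,
    Fintype.card_fin]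

end batchMean

variable [CompleteSpace E]

theorem gradient_eq_smul_sum {ι : Type*} (s : Finset ι) {fi : ι → E → ℝ} {f : E → ℝ} {c : ℝ}
    (hf : ∀ x, f x = c * ∑ i ∈ s, fi i x) (hdiff : ∀ i, Differentiable ℝ (fi i)) (x : E) :
    gradient f x = c • ∑ i ∈ s, gradient (fi i) x := by
  obtain rfl : f = fun y => c * ∑ i ∈ s, fi i y := funext hf
  rw [gradient, fderiv_const_mul (DifferentiableAt.fun_sum fun i _ => (hdiff i).differentiableAt),
    fderiv_fun_sum fun i _ => (hdiff i).differentiableAt, map_smul, map_sum]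
  rfl

theorem image_le_add_inner_gradient_add_sq {f : E → ℝ} {L : ℝ} (hf : Differentiable ℝ f)
    (hL : ∀ x y, ‖gradient f x - gradient f y‖ ≤ L * ‖x - y‖) (x y : E) :
    f y ≤ f x + ⟪gradient f x, y - x⟫ + L / 2 * ‖y - x‖ ^ 2 := by
  set v := y - x
  set φ : ℝ → ℝ := fun t => f (x + t • v) - t * ⟪gradient f x, v⟫ - L / 2 * t ^ 2 * ‖v‖ ^ 2
  have hφ : ∀ t, HasDerivAt φ
      (⟪gradient f (x + t • v), v⟫ - ⟪gradient f x, v⟫ - L * t * ‖v‖ ^ 2) t := by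
    intro t
    have hline : HasDerivAt (fun t : ℝ => x + t • v) v t := by
      simpa using ((hasDerivAt_id t).smul_const v).const_add x
    have hfline := (hf (x + t • v)).hasFDerivAt.comp_hasDerivAt t hline
    rw [← inner_gradient_left] at hfline
    refine ((hfline.sub ((hasDerivAt_id t).mul_const ⟪gradient f x, v⟫)).sub
      (((hasDerivAt_pow 2 t).const_mul (L / 2)).mul_const (‖v‖ ^ 2))).congr_deriv ?_
    ring
  have hslope : ∀ t ∈ interior (Set.Icc (0 : ℝ) 1), deriv φ t ≤ 0 := by
    intro t ht
    rw [interior_Icc] at ht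
    rw [(hφ t).deriv, sub_sub, sub_nonpos, ← sub_le_iff_le_add', ← inner_sub_left]
    calc ⟪gradient f (x + t • v) - gradient f x, v⟫
        ≤ ‖gradient f (x + t • v) - gradient f x‖ * ‖v‖ := real_inner_le_norm _ _
      _ ≤ L * ‖(x + t • v) - x‖ * ‖v‖ := by gcongr; exact hL _ _
      _ = L * t * ‖v‖ ^ 2 := by
        rw [add_sub_cancel_left, norm_smul, Real.norm_of_nonneg ht.1.le]; ring
  -- `φ` is antitone on `[0, 1]`, and `φ 1 ≤ φ 0` is the claim
  have hanti := antitoneOn_of_deriv_nonpos (convex_Icc 0 1)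
    (HasDerivAt.continuousOn fun t _ => hφ t)
    (fun t _ => (hφ t).differentiableAt.differentiableWithinAt) hslope
  have := hanti (Set.left_mem_Icc.2 zero_le_one) (Set.right_mem_Icc.2 zero_le_one) zero_le_one
  simp only [φ, v, zero_smul, add_zero, one_smul, add_sub_cancel] at this
  linarith

theorem sq_norm_gradient_le_of_nonneg {f : E → ℝ} {β : ℝ} (hf : Differentiable ℝ f)
    (hβ : 0 < β) (hL : ∀ x y, ‖gradient f x - gradient f y‖ ≤ β * ‖x - y‖)
    (hnonneg : ∀ x, 0 ≤ f x) (x : E) :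
    ‖gradient f x‖ ^ 2 ≤ 2 * β * f x := by
  have hstep := image_le_add_inner_gradient_add_sq hf hL x (x - β⁻¹ • gradient f x)
  rw [sub_sub_cancel_left, inner_neg_right, real_inner_smul_right, real_inner_self_eq_norm_sq,
    norm_neg, norm_smul, mul_pow, Real.norm_of_nonneg (inv_nonneg.2 hβ.le)] at hstep
  have hdecrease : β⁻¹ * ‖gradient f x‖ ^ 2 ≤ 2 * f x := by
    have : β / 2 * (β⁻¹ ^ 2 * ‖gradient f x‖ ^ 2) = β⁻¹ * ‖gradient f x‖ ^ 2 / 2 := by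
      field_simp
    linarith [hnonneg (x - β⁻¹ • gradient f x)]
  calc ‖gradient f x‖ ^ 2 = β * (β⁻¹ * ‖gradient f x‖ ^ 2) := by field_simp
    _ ≤ β * (2 * f x) := by gcongr
    _ = 2 * β * f x := by ring

theorem image_sub_smul_le_of_norm_sub_le {f : E → ℝ} {L η c : ℝ} (hf : Differentiable ℝ f)
    (hL : ∀ x y, ‖gradient f x - gradient f y‖ ≤ L * ‖x - y‖) (hL0 : 0 ≤ L) (hη : 0 ≤ η)
    (hc : 0 ≤ c) {x g h : E} (hhg : ‖h - g‖ ≤ c * ‖g‖) :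
    f (x - η • h) ≤ f x - η * ⟪gradient f x, g⟫ + η * c / 2 * ‖gradient f x‖ ^ 2
      + (η * c / 2 + η ^ 2 * L * (c + 1) ^ 2 / 2) * ‖g‖ ^ 2 := by
  set w := gradient f x
  have hdesc := image_le_add_inner_gradient_add_sq hf hL x (x - η • h)
  rw [sub_sub_cancel_left, inner_neg_right, real_inner_smul_right, norm_neg, norm_smul, mul_pow,
    Real.norm_of_nonneg hη] at hdesc
  have hinner : ⟪w, g⟫ - c / 2 * (‖w‖ ^ 2 + ‖g‖ ^ 2) ≤ ⟪w, h⟫ := by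
    have hamgm : ‖w‖ * (c * ‖g‖) ≤ c / 2 * (‖w‖ ^ 2 + ‖g‖ ^ 2) := by
      nlinarith [mul_nonneg hc (sq_nonneg (‖w‖ - ‖g‖))]
    have := (real_inner_le_norm w (g - h)).trans
      ((mul_le_mul_of_nonneg_left (norm_sub_rev g h ▸ hhg) (norm_nonneg w)).trans hamgm)
    rw [inner_sub_right] at this
    linarith
  have hnorm : ‖h‖ ^ 2 ≤ (c + 1) ^ 2 * ‖g‖ ^ 2 := by
    rw [← mul_pow]
    gcongr
    linarith [norm_le_norm_add_norm_sub' h g]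
  nlinarith [mul_le_mul_of_nonneg_left hinner hη,
    mul_le_mul_of_nonneg_left hnorm (by positivity : 0 ≤ L / 2 * η ^ 2)]

section SAM

variable {κ : Type*} {B : ℕ}

/-- The SAM update `x - η g_B(x + ρ g_B(x))`, where `g_B` is the gradient averaged over the
batch `b`. -/
noncomputable def samStep (fi : κ → E → ℝ) (η ρ : ℝ) (b : Fin B → κ) (x : E) : E :=
  x - η • batchMean (fun i => gradient (fi i) (x + ρ • batchMean (fun i => gradient (fi i) x) b)) b

variable {fi : κ → E → ℝ} {f : E → ℝ} {β L η ρ : ℝ}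

theorem image_samStep_le (hfdiff : Differentiable ℝ f)
    (hL : ∀ x y, ‖gradient f x - gradient f y‖ ≤ L * ‖x - y‖) (hL0 : 0 ≤ L) (hβ : 0 ≤ β)
    (hβsmooth : ∀ i x y, ‖gradient (fi i) x - gradient (fi i) y‖ ≤ β * ‖x - y‖)
    (hη : 0 ≤ η) (hρ : 0 ≤ ρ) (b : Fin B → κ) (x : E) :
    f (samStep fi η ρ b x)
      ≤ f x - η * ⟪gradient f x, batchMean (fun i => gradient (fi i) x) b⟫
        + η * (β * ρ) / 2 * ‖gradient f x‖ ^ 2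
        + (η * (β * ρ) / 2 + η ^ 2 * L * (β * ρ + 1) ^ 2 / 2)
          * ‖batchMean (fun i => gradient (fi i) x) b‖ ^ 2 := by
  set g := batchMean (fun i => gradient (fi i) x) b
  refine image_sub_smul_le_of_norm_sub_le hfdiff hL hL0 hη (by positivity) ?_
  calc _ ≤ β * ‖x + ρ • g - x‖ := norm_batchMean_sub_le (by positivity) (fun i => hβsmooth i _ _) b
    _ = β * ρ * ‖g‖ := by rw [add_sub_cancel_left, norm_smul, Real.norm_of_nonneg hρ, mul_assoc]

variable [Fintype κ]

theorem expect_sq_norm_gradient_le (hβ : 0 < β)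
    (hf : ∀ x, f x = (Fintype.card κ : ℝ)⁻¹ * ∑ i, fi i x) (hdiff : ∀ i, Differentiable ℝ (fi i))
    (hβsmooth : ∀ i x y, ‖gradient (fi i) x - gradient (fi i) y‖ ≤ β * ‖x - y‖)
    (hnonneg : ∀ i x, 0 ≤ fi i x) (x : E) :
    𝔼 i, ‖gradient (fi i) x‖ ^ 2 ≤ 2 * β * f x :=
  calc 𝔼 i, ‖gradient (fi i) x‖ ^ 2 ≤ 𝔼 i, 2 * β * fi i x := expect_le_expect fun i _ =>
        sq_norm_gradient_le_of_nonneg (hdiff i) hβ (hβsmooth i) (hnonneg i) x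
    _ = 2 * β * f x := by
        rw [← mul_expect, Fintype.expect_eq_sum_div_card, hf, div_eq_inv_mul]

variable [Nonempty κ]

theorem expect_image_samStep_le (hB : 0 < B)
    (hf : ∀ x, f x = (Fintype.card κ : ℝ)⁻¹ * ∑ i, fi i x) (hdiff : ∀ i, Differentiable ℝ (fi i))
    (hfdiff : Differentiable ℝ f)
    (hL : ∀ x y, ‖gradient f x - gradient f y‖ ≤ L * ‖x - y‖) (hL0 : 0 ≤ L) (hβ : 0 ≤ β)
    (hβsmooth : ∀ i x y, ‖gradient (fi i) x - gradient (fi i) y‖ ≤ β * ‖x - y‖)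
    (hη : 0 ≤ η) (hρ : 0 ≤ ρ) (x : E) :
    𝔼 b : Fin B → κ, f (samStep fi η ρ b x)
      ≤ f x - η * (1 - β * ρ / 2) * ‖gradient f x‖ ^ 2
        + (η * (β * ρ) / 2 + η ^ 2 * L * (β * ρ + 1) ^ 2 / 2)
          * ((1 - (B : ℝ)⁻¹) * ‖gradient f x‖ ^ 2
            + (B : ℝ)⁻¹ * 𝔼 i, ‖gradient (fi i) x‖ ^ 2) := by
  have hgrad := gradient_eq_smul_sum univ hf hdiff x
  have hmean : 𝔼 b : Fin B → κ, ⟪gradient f x, batchMean (fun i => gradient (fi i) x) b⟫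
      = ‖gradient f x‖ ^ 2 := by
    rw [expect_inner_batchMean hB, ← inner_inv_card_smul_sum_right, ← hgrad,
      real_inner_self_eq_norm_sq]
  have hvar := expect_norm_sq_batchMean hB fun i => gradient (fi i) x
  rw [← hgrad] at hvar
  refine (expect_le_expect fun b _ =>
    image_samStep_le hfdiff hL hL0 hβ hβsmooth hη hρ b x).trans_eq ?_
  simp only [expect_add_distrib, expect_sub_distrib, ← mul_expect, Fintype.expect_const]
  rw [hmean, hvar]
  ring

end SAM

end InnerProductSpace

theorem expect_eq_inv_pow_mul_sum {n B : ℕ} (F : (Fin B → Fin n) → ℝ) :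
    𝔼 b, F b = ((n : ℝ) ^ B)⁻¹ * ∑ b, F b := by
  rw [Fintype.expect_eq_sum_div_card, Fintype.card_fun, Fintype.card_fin, Fintype.card_fin,
    Nat.cast_pow, inv_mul_eq_div]

theorem minibatch_sam_descent_general
    {n B d : ℕ} (hn : 0 < n) (hB : 0 < B)
    (β lam α η ρ : ℝ)
    (hβ : 0 < β) (hlam : 0 < lam) (hα : 0 < α) (hη : 0 ≤ η) (hρ : 0 ≤ ρ)
    (fi : Fin n → EuclideanSpace ℝ (Fin d) → ℝ)
    (f : EuclideanSpace ℝ (Fin d) → ℝ)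
    (hfdef : ∀ x, f x = (n : ℝ)⁻¹ * ∑ i, fi i x)
    (hdiff : ∀ i, Differentiable ℝ (fi i)) (hfdiff : Differentiable ℝ f)
    (hnonneg : ∀ i x, 0 ≤ fi i x)
    (hβsmooth : ∀ i x y, ‖gradient (fi i) x - gradient (fi i) y‖ ≤ β * ‖x - y‖)
    (hlamsmooth : ∀ x y, ‖gradient f x - gradient f y‖ ≤ lam * ‖x - y‖)
    (hPL : ∀ x, α * f x ≤ ‖gradient f x‖ ^ 2)
    (hτ : 0 ≤ (1 - β * ρ / 2)
        - ((B : ℝ) - 1) / (2 * B) * (η * lam * (β * ρ + 1) ^ 2 + β * ρ))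
    (x : EuclideanSpace ℝ (Fin d)) :
    ((n : ℝ) ^ B)⁻¹ *
        ∑ b : Fin B → Fin n,
          f (x - η • ((B : ℝ)⁻¹ • ∑ j, gradient (fi (b j))
                (x + ρ • ((B : ℝ)⁻¹ • ∑ j', gradient (fi (b j')) x))))
      ≤ (1 - η * α * (1 - ((B : ℝ)⁻¹ * (((B : ℝ) - 1) / 2 + β / α) + 1 / 2) * β * ρ)
            + η ^ 2 * α * lam * (β * ρ + 1) ^ 2 *
                ((B : ℝ)⁻¹ * (((B : ℝ) - 1) / 2 + β / α))) * f x := by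
  have : Nonempty (Fin n) := ⟨⟨0, hn⟩⟩
  have hf : ∀ x, f x = (Fintype.card (Fin n) : ℝ)⁻¹ * ∑ i, fi i x := by simpa using hfdef
  set C := η * (β * ρ) / 2 + η ^ 2 * lam * (β * ρ + 1) ^ 2 / 2 with hC
  set T := η * (1 - β * ρ / 2) - C * (1 - (B : ℝ)⁻¹) with hT
  have hT0 : 0 ≤ T := by
    have hTτ : T = η * ((1 - β * ρ / 2)
        - ((B : ℝ) - 1) / (2 * B) * (η * lam * (β * ρ + 1) ^ 2 + β * ρ)) := by
      rw [hT, hC]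
      field_simp
      ring
    exact hTτ ▸ mul_nonneg hη hτ
  rw [← expect_eq_inv_pow_mul_sum]
  calc _ ≤ f x - η * (1 - β * ρ / 2) * ‖gradient f x‖ ^ 2
        + C * ((1 - (B : ℝ)⁻¹) * ‖gradient f x‖ ^ 2 + (B : ℝ)⁻¹ * 𝔼 i, ‖gradient (fi i) x‖ ^ 2) :=
      expect_image_samStep_le hB hf hdiff hfdiff hlamsmooth hlam.le hβ.le hβsmooth hη hρ x
    _ = f x - T * ‖gradient f x‖ ^ 2 + C * (B : ℝ)⁻¹ * 𝔼 i, ‖gradient (fi i) x‖ ^ 2 := by ring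
    _ ≤ f x - T * (α * f x) + C * (B : ℝ)⁻¹ * (2 * β * f x) := by
      gcongr
      · exact hPL x
      · exact expect_sq_norm_gradient_le hβ hf hdiff hβsmooth hnonneg x
    _ = _ := by
      rw [hT, hC]
      field_simp
      ring

/-- One-step descent lemma for mini-batch SAM: with each `f_i` β-smooth, `f` λ-smooth and
α-PL, interpolation, and the coefficient `τ₂` nonnegative, the mini-batch SAM update
satisfies `E[f(x_{t+1}) | x_t] ≤ (1 − ηα(1 − (κ_B + 1/2)βρ) + η²αλ(βρ+1)²κ_B)·f(x_t)`,
where `κ_B = (1/B)((B−1)/2 + β/α)` and the expectation is over the batch of `B`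
i.i.d. uniform indices. -/
theorem minibatch_sam_descent
    {n B d : ℕ} (hn : 0 < n) (hB : 0 < B)
    (β lam α η ρ : ℝ)
    (hβ : 0 < β) (hlam : 0 < lam) (hα : 0 < α) (hη : 0 ≤ η) (hρ : 0 ≤ ρ)
    (fi : Fin n → EuclideanSpace ℝ (Fin d) → ℝ)
    (f : EuclideanSpace ℝ (Fin d) → ℝ)
    (hfdef : ∀ x, f x = (n : ℝ)⁻¹ * ∑ i, fi i x)
    (hdiff : ∀ i, Differentiable ℝ (fi i)) (hfdiff : Differentiable ℝ f)
    (hnonneg : ∀ i x, 0 ≤ fi i x)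
    (hβsmooth : ∀ i x y, ‖gradient (fi i) x - gradient (fi i) y‖ ≤ β * ‖x - y‖)
    (hlamsmooth : ∀ x y, ‖gradient f x - gradient f y‖ ≤ lam * ‖x - y‖)
    (xstar : EuclideanSpace ℝ (Fin d))
    (hPL : ∀ x, α * f x ≤ ‖gradient f x‖ ^ 2)
    (hinterp : ∀ i, fi i xstar = 0 ∧ gradient (fi i) xstar = 0)
    (hτ : 0 ≤ (1 - β * ρ / 2)
        - ((B : ℝ) - 1) / (2 * B) * (η * lam * (β * ρ + 1) ^ 2 + β * ρ))
    (x : EuclideanSpace ℝ (Fin d)) :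
    ((n : ℝ) ^ B)⁻¹ *
        ∑ b : Fin B → Fin n,
          f (x - η • ((B : ℝ)⁻¹ • ∑ j, gradient (fi (b j))
                (x + ρ • ((B : ℝ)⁻¹ • ∑ j', gradient (fi (b j')) x))))
      ≤ (1 - η * α * (1 - ((B : ℝ)⁻¹ * (((B : ℝ) - 1) / 2 + β / α) + 1 / 2) * β * ρ)
            + η ^ 2 * α * lam * (β * ρ + 1) ^ 2 *
                ((B : ℝ)⁻¹ * (((B : ℝ) - 1) / 2 + β / α))) * f x :=
  minibatch_sam_descent_general hn hB β lam α η ρ hβ hlam hα hη hρ fi f hfdef hdiff hfdiff hnonneg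
    hβsmooth hlamsmooth hPL hτ x
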